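/- arXiv:1008.2018 — 4 statements merged into one kernel-verified Lean document; each statement's English description precedes it below -/
import Mathlib

section
/- Let F_1, F_2, F_3, h_1, h_2, h_3 be polynomials in ℂ[x,y,z] satisfying h_1^2·F_1 + h_2^3·F_2 + h_3^6·F_3 = 0. Then the polynomials h̄_1 := F_1^2·F_2·h_1, h̄_2 := F_1·F_2·h_2, h̄_3 := h_3 satisfy h̄_1^2 + h̄_2^3 + h̄_3^6·(F_1^3·F_2^2·F_3) = 0. Consequently every quasi-toric relation of type (2,3,6) is equivalent to one of the form h̄_1^2 + h̄_2^3 + h̄_3^6·G = 0 with G := F_1^3·F_2^2·F_3. -/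
theorem add_add_eq_zero_of_quasiToric_236 {R : Type*} [CommRing R] {F₁ F₂ F₃ h₁ h₂ h₃ : R}
    (hrel : h₁ ^ 2 * F₁ + h₂ ^ 3 * F₂ + h₃ ^ 6 * F₃ = 0) :
    (F₁ ^ 2 * F₂ * h₁) ^ 2 + (F₁ * F₂ * h₂) ^ 3 + h₃ ^ 6 * (F₁ ^ 3 * F₂ ^ 2 * F₃) = 0 := by
  linear_combination F₁ ^ 3 * F₂ ^ 2 * hrel

/-- If `h₁²·F₁ + h₂³·F₂ + h₃⁶·F₃ = 0` in `ℂ[x,y,z]`, then with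
`h̄₁ := F₁²·F₂·h₁`, `h̄₂ := F₁·F₂·h₂`, `h̄₃ := h₃` and `G := F₁³·F₂²·F₃` one has
`h̄₁² + h̄₂³ + h̄₃⁶·G = 0`; moreover `λ := F₁³·F₂²` realizes the equivalence of
the two quasi-toric relations of type `(2,3,6)`:
`h̄ᵢ^{eᵢ}·F̄ᵢ = λ·hᵢ^{eᵢ}·Fᵢ` (with `F̄₁ = F̄₂ = 1`, `F̄₃ = G`) and
`h̄₁·h̄₂·h̄₃ = λ·h₁·h₂·h₃`. -/
theorem stmt_3 (F₁ F₂ F₃ h₁ h₂ h₃ : MvPolynomial (Fin 3) ℂ)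
    (hrel : h₁ ^ 2 * F₁ + h₂ ^ 3 * F₂ + h₃ ^ 6 * F₃ = 0) :
    (F₁ ^ 2 * F₂ * h₁) ^ 2 + (F₁ * F₂ * h₂) ^ 3 +
        h₃ ^ 6 * (F₁ ^ 3 * F₂ ^ 2 * F₃) = 0 ∧
      (F₁ ^ 2 * F₂ * h₁) ^ 2 * 1 = F₁ ^ 3 * F₂ ^ 2 * (h₁ ^ 2 * F₁) ∧
      (F₁ * F₂ * h₂) ^ 3 * 1 = F₁ ^ 3 * F₂ ^ 2 * (h₂ ^ 3 * F₂) ∧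
      h₃ ^ 6 * (F₁ ^ 3 * F₂ ^ 2 * F₃) = F₁ ^ 3 * F₂ ^ 2 * (h₃ ^ 6 * F₃) ∧
      (F₁ ^ 2 * F₂ * h₁) * (F₁ * F₂ * h₂) * h₃ = F₁ ^ 3 * F₂ ^ 2 * (h₁ * h₂ * h₃) :=
  ⟨add_add_eq_zero_of_quasiToric_236 hrel, by ring, by ring, by ring, by ring⟩
end

section
/- Let K be the field ℂ(x,y) (the fraction field of the polynomial ring over ℂ in two variables) and let F ∈ K. Suppose f_2, f_3, g_2, g_3 ∈ K satisfy f_2^3 + f_3^2 = F, g_2^3 + g_3^2 = F, and f_2 ≠ g_2. Then u := (g_2·f_2^2 + g_2^2·f_2 + 2·g_3·f_3 − 2F)/(f_2 − g_2)^2 and v := (3·f_2·g_2·(f_3·g_2 − g_3·f_2) + (f_3 − g_3)·(g_3·f_3 − 3F))/(f_2 − g_2)^3 satisfy u^3 + v^2 = F. -/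
/-! With `x = -u`, the curve `u³ + v² = F` is the Weierstrass cubic `v² = x³ + F`, and the
displayed formulas are the chord construction through the two given points. Clearing the
denominator `(f₂ - g₂)⁶` turns the claim into a polynomial identity modulo the two curve
equations, which holds over any commutative ring. -/

theorem addition_law_numerators {R : Type*} [CommRing R] (F f₂ f₃ g₂ g₃ : R)
    (hf : f₂ ^ 3 + f₃ ^ 2 = F) (hg : g₂ ^ 3 + g₃ ^ 2 = F) :
    (g₂ * f₂ ^ 2 + g₂ ^ 2 * f₂ + 2 * g₃ * f₃ - 2 * F) ^ 3 +
      (3 * f₂ * g₂ * (f₃ * g₂ - g₃ * f₂) + (f₃ - g₃) * (g₃ * f₃ - 3 * F)) ^ 2 =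
      F * (f₂ - g₂) ^ 6 := by
  subst hf
  linear_combination (f₃^2*g₃^2 - f₃^2*g₂^3 - f₃^4 + 6*f₂*f₃^2*g₂^2
    + 6*f₂^2*f₃*g₂*g₃ - 12*f₂^2*f₃^2*g₂ - 6*f₂^3*f₃*g₃ + 7*f₂^3*f₃^2
    + 9*f₂^4*g₂^2 - 18*f₂^5*g₂ + 9*f₂^6) * hg

theorem addition_law {K : Type*} [Field K] (F f₂ f₃ g₂ g₃ : K)
    (hf : f₂ ^ 3 + f₃ ^ 2 = F) (hg : g₂ ^ 3 + g₃ ^ 2 = F) (hne : f₂ ≠ g₂) :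
    ((g₂ * f₂ ^ 2 + g₂ ^ 2 * f₂ + 2 * g₃ * f₃ - 2 * F) / (f₂ - g₂) ^ 2) ^ 3 +
      ((3 * f₂ * g₂ * (f₃ * g₂ - g₃ * f₂) + (f₃ - g₃) * (g₃ * f₃ - 3 * F)) /
          (f₂ - g₂) ^ 3) ^ 2 = F := by
  have hd : (f₂ - g₂) ^ 6 ≠ 0 := pow_ne_zero _ (sub_ne_zero.mpr hne)
  rw [div_pow, div_pow, ← pow_mul, ← pow_mul, ← add_div, div_eq_iff hd]
  exact addition_law_numerators F f₂ f₃ g₂ g₃ hf hg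

/-- Addition law on sections of the elliptic threefold `u² + v³ = F` over
`K = ℂ(x,y)`: if `f₂³ + f₃² = F`, `g₂³ + g₃² = F` and `f₂ ≠ g₂`, then the pair
`(u, v)` given by the displayed formulas again satisfies `u³ + v² = F`. -/
theorem stmt_5 (F f₂ f₃ g₂ g₃ : FractionRing (MvPolynomial (Fin 2) ℂ))
    (hf : f₂ ^ 3 + f₃ ^ 2 = F) (hg : g₂ ^ 3 + g₃ ^ 2 = F) (hne : f₂ ≠ g₂) :
    ((g₂ * f₂ ^ 2 + g₂ ^ 2 * f₂ + 2 * g₃ * f₃ - 2 * F) / (f₂ - g₂) ^ 2) ^ 3 +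
      ((3 * f₂ * g₂ * (f₃ * g₂ - g₃ * f₂) + (f₃ - g₃) * (g₃ * f₃ - 3 * F)) /
          (f₂ - g₂) ^ 3) ^ 2 = F :=
  addition_law F f₂ f₃ g₂ g₃ hf hg hne
end

section
/- Let ω ∈ ℂ satisfy ω^2 + ω + 1 = 0 (a primitive cube root of unity). Define in ℂ[x,y,z]: L_0 := x + y + z, C_{4,3} := x²y² + y²z² + z²x² − 2xyz(x+y+z), C_2 := zx + ω·yz − (1+ω)·xy, and C_3 := x²y − x²z − y²x − 3(1+2ω)·xyz + y²z + z²x − yz². Then 4·C_2^3 + C_3^2 = C_{4,3}·L_0^2. In particular the non-reduced sextic C_{4,3}·L_0^2 supports a quasi-toric relation of elliptic type (2,3,6). -/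
open MvPolynomial

section

variable {R : Type*} [CommRing R]

def bitangentLine (x y z : R) : R := x + y + z

def tricuspidalQuartic (x y z : R) : R :=
  x ^ 2 * y ^ 2 + y ^ 2 * z ^ 2 + z ^ 2 * x ^ 2 - 2 * (x * y * z) * (x + y + z)

def quasiToricConic (ω x y z : R) : R := z * x + ω * (y * z) - (1 + ω) * (x * y)

def quasiToricCubic (ω x y z : R) : R :=
  x ^ 2 * y - x ^ 2 * z - y ^ 2 * x - 3 * (1 + 2 * ω) * (x * y * z) + y ^ 2 * z + z ^ 2 * x
    - y * z ^ 2

theorem four_mul_quasiToricConic_pow_three_add_quasiToricCubic_sq {ω : R}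
    (hω : ω ^ 2 + ω + 1 = 0) (x y z : R) :
    4 * quasiToricConic ω x y z ^ 3 + quasiToricCubic ω x y z ^ 2 =
      tricuspidalQuartic x y z * bitangentLine x y z ^ 2 := by
  unfold quasiToricConic quasiToricCubic tricuspidalQuartic bitangentLine
  -- As polynomials in `ω`, the two sides differ by this multiple of `ω ^ 2 + ω + 1`.
  linear_combination 4 * y ^ 2 * (ω * y * (z - x) ^ 3 + 3 * x * z ^ 3 - y * z ^ 3
    + 3 * x ^ 2 * z ^ 2 + 3 * x ^ 2 * y * z + 3 * x ^ 3 * z - 2 * x ^ 3 * y) * hω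

end

/-- The quasi-toric relation of elliptic type `(2,3,6)` supported by the
non-reduced sextic `C₄,₃ · L₀²` (tricuspidal quartic together with its
bitangent): with `ω` a primitive cube root of unity, `x = X 0`, `y = X 1`,
`z = X 2`, one has `4·C₂³ + C₃² = C₄,₃ · L₀²`. -/
theorem stmt_9 (ω : ℂ) (hω : ω ^ 2 + ω + 1 = 0) :
    4 * (X 2 * X 0 + C ω * (X 1 * X 2) - C (1 + ω) * (X 0 * X 1)) ^ 3 +
      ((X 0) ^ 2 * X 1 - (X 0) ^ 2 * X 2 - (X 1) ^ 2 * X 0 -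
        C (3 * (1 + 2 * ω)) * (X 0 * X 1 * X 2) +
        (X 1) ^ 2 * X 2 + (X 2) ^ 2 * X 0 - X 1 * (X 2) ^ 2) ^ 2 =
    ((X 0) ^ 2 * (X 1) ^ 2 + (X 1) ^ 2 * (X 2) ^ 2 + (X 2) ^ 2 * (X 0) ^ 2 -
        2 * (X 0 * X 1 * X 2) * (X 0 + X 1 + X 2)) *
      ((X 0 + X 1 + X 2 : MvPolynomial (Fin 3) ℂ)) ^ 2 := by
  have hCω : C ω ^ 2 + C ω + 1 = (0 : MvPolynomial (Fin 3) ℂ) := by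
    simpa only [map_add, map_pow, map_one, map_zero]
      using congrArg (C : ℂ →+* MvPolynomial (Fin 3) ℂ) hω
  simpa only [quasiToricConic, quasiToricCubic, tricuspidalQuartic, bitangentLine, map_add,
    map_mul, map_one, map_ofNat]
    using four_mul_quasiToricConic_pow_three_add_quasiToricCubic_sq hCω (X 0) (X 1) (X 2)
end

section
/- Let ω ∈ ℂ satisfy ω^2 + ω + 1 = 0 (a primitive cube root of unity). For i = 1, 2, 3 define in ℂ[x,y,z]: F_i := (y − ω^i·z)(z − ω^{i+1}·x)(x − ω^{i+2}·y), and define the linear forms ℓ_1 := (ω−ω²)x + (ω−ω²)y + (ω²−1)z, ℓ_2 := (ω−ω²)z + (ω−ω²)x + (ω²−1)y, ℓ_3 := (ω−ω²)y + (ω−ω²)z + (ω²−1)x. Then ℓ_1³·F_1 + ℓ_2³·F_2 + ℓ_3³·F_3 = 0, and moreover F_1·F_2·F_3 = (y³−z³)(z³−x³)(x³−y³). In particular the curve (y³−z³)(z³−x³)(x³−y³) = 0 supports a quasi-toric relation of elliptic type (3,3,3) with nonconstant coefficients ℓ_i. -/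
/-!
Since `ω³ = 1`, the factors of `Fᵢ` regroup into `∏ₖ (y − ωᵏz) · ∏ₖ (z − ωᵏx) · ∏ₖ (x − ωᵏy)`,
which is the product of the three differences of cubes. Each `ℓᵢ` is `ω(1 − ω)` times the
linear form `x + y + ωz` (cyclically permuted), so the quasi-toric relation reduces to a
polynomial identity modulo `ω² + ω + 1`, checked by Gröbner-basis reduction.
-/

open MvPolynomial

section CubeRootOfUnity

variable {R : Type*} [CommRing R] {ω : R}

theorem pow_three_eq_one_of_sq_add_self_add_one (hω : ω ^ 2 + ω + 1 = 0) : ω ^ 3 = 1 := by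
  linear_combination (ω - 1) * hω

theorem sub_pow_three_eq_mul_of_sq_add_self_add_one (hω : ω ^ 2 + ω + 1 = 0) (x y : R) :
    x ^ 3 - y ^ 3 = (x - y) * (x - ω * y) * (x - ω ^ 2 * y) := by
  linear_combination (x - y) * (x * y - (ω - 1) * y ^ 2) * hω

theorem cube_linear_forms_relation (hω : ω ^ 2 + ω + 1 = 0) (x y z : R) :
    (x + y + ω * z) ^ 3 * ((y - ω * z) * (z - ω ^ 2 * x) * (x - y)) +
      (z + x + ω * y) ^ 3 * ((y - ω ^ 2 * z) * (z - x) * (x - ω * y)) +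
      (y + z + ω * x) ^ 3 * ((y - z) * (z - ω * x) * (x - ω ^ 2 * y)) = 0 := by
  grind

theorem quasiToric_relation (hω : ω ^ 2 + ω + 1 = 0) (x y z : R) :
    ((ω - ω ^ 2) * x + (ω - ω ^ 2) * y + (ω ^ 2 - 1) * z) ^ 3 *
          ((y - ω ^ 1 * z) * (z - ω ^ 2 * x) * (x - ω ^ 3 * y)) +
        ((ω - ω ^ 2) * z + (ω - ω ^ 2) * x + (ω ^ 2 - 1) * y) ^ 3 *
          ((y - ω ^ 2 * z) * (z - ω ^ 3 * x) * (x - ω ^ 4 * y)) +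
        ((ω - ω ^ 2) * y + (ω - ω ^ 2) * z + (ω ^ 2 - 1) * x) ^ 3 *
          ((y - ω ^ 3 * z) * (z - ω ^ 4 * x) * (x - ω ^ 5 * y)) = 0 := by
  have h3 := pow_three_eq_one_of_sq_add_self_add_one hω
  have hℓ (a b c : R) :
      (ω - ω ^ 2) * a + (ω - ω ^ 2) * b + (ω ^ 2 - 1) * c = ω * (1 - ω) * (a + b + ω * c) := by
    linear_combination c * h3
  have h4 : ω ^ 4 = ω := by rw [pow_succ, h3, one_mul]
  have h5 : ω ^ 5 = ω ^ 2 := by rw [pow_succ, h4, sq]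
  rw [hℓ, hℓ, hℓ, pow_one, h4, h5, h3]
  linear_combination (ω * (1 - ω)) ^ 3 * cube_linear_forms_relation hω x y z

theorem prod_eq_prod_sub_pow_three (hω : ω ^ 2 + ω + 1 = 0) (x y z : R) :
    ((y - ω ^ 1 * z) * (z - ω ^ 2 * x) * (x - ω ^ 3 * y)) *
        ((y - ω ^ 2 * z) * (z - ω ^ 3 * x) * (x - ω ^ 4 * y)) *
        ((y - ω ^ 3 * z) * (z - ω ^ 4 * x) * (x - ω ^ 5 * y)) =
      (y ^ 3 - z ^ 3) * (z ^ 3 - x ^ 3) * (x ^ 3 - y ^ 3) := by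
  have h3 := pow_three_eq_one_of_sq_add_self_add_one hω
  have h4 : ω ^ 4 = ω := by rw [pow_succ, h3, one_mul]
  have h5 : ω ^ 5 = ω ^ 2 := by rw [pow_succ, h4, sq]
  simp only [sub_pow_three_eq_mul_of_sq_add_self_add_one hω, pow_one, h3, h4, h5]
  ring

end CubeRootOfUnity

/-- The quasi-toric relation of elliptic type `(3,3,3)` with nonconstant
coefficients supported by the nine lines `(y³−z³)(z³−x³)(x³−y³) = 0`:
with `ω` a primitive cube root of unity,
`Fᵢ := (y − ωⁱz)(z − ω^{i+1}x)(x − ω^{i+2}y)` and the linear forms `ℓᵢ` as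
displayed, one has `ℓ₁³F₁ + ℓ₂³F₂ + ℓ₃³F₃ = 0` and
`F₁F₂F₃ = (y³−z³)(z³−x³)(x³−y³)` (here `x = X 0`, `y = X 1`, `z = X 2`). -/
theorem stmt_11 (ω : ℂ) (hω : ω ^ 2 + ω + 1 = 0) :
    ((C (ω - ω ^ 2) * X 0 + C (ω - ω ^ 2) * X 1 + C (ω ^ 2 - 1) * X 2) ^ 3 *
          ((X 1 - C (ω ^ 1) * X 2) * (X 2 - C (ω ^ 2) * X 0) * (X 0 - C (ω ^ 3) * X 1)) +
        (C (ω - ω ^ 2) * X 2 + C (ω - ω ^ 2) * X 0 + C (ω ^ 2 - 1) * X 1) ^ 3 *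
          ((X 1 - C (ω ^ 2) * X 2) * (X 2 - C (ω ^ 3) * X 0) * (X 0 - C (ω ^ 4) * X 1)) +
        (C (ω - ω ^ 2) * X 1 + C (ω - ω ^ 2) * X 2 + C (ω ^ 2 - 1) * X 0) ^ 3 *
          ((X 1 - C (ω ^ 3) * X 2) * (X 2 - C (ω ^ 4) * X 0) * (X 0 - C (ω ^ 5) * X 1)) =
      (0 : MvPolynomial (Fin 3) ℂ)) ∧
    (((X 1 - C (ω ^ 1) * X 2) * (X 2 - C (ω ^ 2) * X 0) * (X 0 - C (ω ^ 3) * X 1)) *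
        ((X 1 - C (ω ^ 2) * X 2) * (X 2 - C (ω ^ 3) * X 0) * (X 0 - C (ω ^ 4) * X 1)) *
        ((X 1 - C (ω ^ 3) * X 2) * (X 2 - C (ω ^ 4) * X 0) * (X 0 - C (ω ^ 5) * X 1)) =
      ((X 1) ^ 3 - (X 2) ^ 3) * ((X 2) ^ 3 - (X 0) ^ 3) *
        (((X 0) ^ 3 - (X 1) ^ 3 : MvPolynomial (Fin 3) ℂ))) := by
  have hCω : (C ω : MvPolynomial (Fin 3) ℂ) ^ 2 + C ω + 1 = 0 := by
    rw [← map_pow, ← map_add, ← map_one C, ← map_add, hω, map_zero]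
  simp only [map_sub, map_pow, map_one]
  exact ⟨quasiToric_relation hCω _ _ _, prod_eq_prod_sub_pow_three hCω _ _ _⟩
end
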